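/- arXiv:cs/9909004 — 4 statements merged into one kernel-verified Lean document; each statement's English description precedes it below -/
import Mathlib

section
/- Let r > 0, let 0 < a < r, and let f : [0, a] → ℝ be a convex, continuously differentiable function with f(0) = 0 and f'(0) = 0, such that f(x) > r − √(r² − x²) for all x ∈ (0, a] (the graph of f lies strictly above the circular arc of radius r tangent to the x-axis at the origin). Then the average curvature of the graph of f exceeds 1/r: there exist 0 ≤ x₁ < x₂ ≤ a such that arctan(f'(x₂)) − arctan(f'(x₁)) > (1/r) · ∫_{x₁}^{x₂} √(1 + f'(u)²) du (the right-hand integral is the arc length of the graph of f between x₁ and x₂, and arctan(f'(x)) is the turning angle of the graph at (x, f(x))). -/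
/-!
Suppose the inequality fails for every pair `x₁ < x₂`. Taking `x₁ = 0`, the tangent angle
`θ = arctan f'` satisfies `θ(x) ≤ s(x) / r`, where `s(x)` is the arc length from the origin.
As `f' ≥ 0` by convexity,
`(r sin (s / r))' = cos (s / r) √(1 + f'²) ≤ cos θ √(1 + f'²) = 1` while `s / r ≤ π`,
so `r sin (s(x) / r) ≤ x`. This keeps `s / r` below `π / 2` on `[0, a]` (reaching it at `c`
would force `r ≤ c ≤ a`), hence `θ(x) ≤ s(x) / r ≤ arcsin (x / r)`, the
tangent angle of the circle `r - √(r² - x²)`. So `f` rises no faster than that circle, and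
`f(a) ≤ r - √(r² - a²)`, a contradiction.
-/

open Real Set

theorem ConvexOn.monotoneOn_of_hasDerivWithinAt {S : Set ℝ} {f f' : ℝ → ℝ}
    (hfc : ConvexOn ℝ S f) (hf : ∀ x ∈ S, HasDerivWithinAt f (f' x) S x) :
    MonotoneOn f' S := by
  intro x hx y hy hxy
  rcases hxy.eq_or_lt with rfl | hlt
  · rfl
  · exact (hfc.le_slope_of_hasDerivWithinAt hx hy hlt (hf x hx)).trans
      (hfc.slope_le_of_hasDerivWithinAt hx hy hlt (hf y hy))

theorem sub_le_sub_of_hasDerivWithinAt_le {f φ f' φ' : ℝ → ℝ} {a b : ℝ} (hab : a ≤ b)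
    (hf : ∀ x ∈ Icc a b, HasDerivWithinAt f (f' x) (Icc a b) x)
    (hφc : ContinuousOn φ (Icc a b)) (hφ : ∀ x ∈ Ioo a b, HasDerivAt φ (φ' x) x)
    (hle : ∀ x ∈ Ioo a b, f' x ≤ φ' x) : f b - f a ≤ φ b - φ a := by
  have hanti : AntitoneOn (fun x => f x - φ x) (Icc a b) := by
    refine antitoneOn_of_hasDerivWithinAt_nonpos (convex_Icc a b)
      (ContinuousOn.sub (fun x hx => (hf x hx).continuousWithinAt) hφc)
      (f' := fun x => f' x - φ' x) ?_ ?_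
    · intro x hx
      rw [interior_Icc] at hx ⊢
      exact ((hf x (Ioo_subset_Icc_self hx)).mono Ioo_subset_Icc_self).sub
        (hφ x hx).hasDerivWithinAt
    · intro x hx
      rw [interior_Icc] at hx
      exact sub_nonpos.2 (hle x hx)
  have := hanti (left_mem_Icc.2 hab) (right_mem_Icc.2 hab) hab
  linarith

theorem hasDerivAt_sub_sqrt_sq_sub_sq {r x : ℝ} (hx : x ^ 2 < r ^ 2) :
    HasDerivAt (fun y => r - √(r ^ 2 - y ^ 2)) (x / √(r ^ 2 - x ^ 2)) x := by
  have hpos : 0 < √(r ^ 2 - x ^ 2) := sqrt_pos.2 (sub_pos.2 hx)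
  refine ((((hasDerivAt_pow 2 x).const_sub (r ^ 2)).sqrt
    (sub_pos.2 hx).ne').const_sub r).congr_deriv ?_
  field_simp
  ring

theorem arcsin_div_eq_arctan {r x : ℝ} (hr : 0 < r) (hx : |x| < r) :
    arcsin (x / r) = arctan (x / √(r ^ 2 - x ^ 2)) := by
  have hx' : x / r ∈ Ioo (-1) 1 := by
    rw [mem_Ioo, lt_div_iff₀ hr, div_lt_iff₀ hr]
    constructor <;> linarith [neg_abs_le x, le_abs_self x]
  rw [arcsin_eq_arctan hx', div_pow, one_sub_div (pow_ne_zero 2 hr.ne'),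
    sqrt_div' _ (sq_nonneg r), sqrt_sq hr.le, div_div_div_cancel_right₀ hr.ne']

/-- Arc length from abscissa `0` to `x` of a graph whose slope is `g`. -/
noncomputable def arcLength (g : ℝ → ℝ) (x : ℝ) : ℝ :=
  ∫ u in (0 : ℝ)..x, √(1 + g u ^ 2)

section arcLength

variable {g : ℝ → ℝ}

@[simp]
theorem arcLength_zero : arcLength g 0 = 0 := intervalIntegral.integral_same

theorem hasDerivAt_arcLength (hg : Continuous g) (x : ℝ) :
    HasDerivAt (arcLength g) (√(1 + g x ^ 2)) x :=
  ((continuous_sqrt.comp (continuous_const.add (hg.pow 2))).integral_hasStrictDerivAt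
    0 x).hasDerivAt

theorem continuous_arcLength (hg : Continuous g) : Continuous (arcLength g) :=
  continuous_iff_continuousAt.2 fun x => (hasDerivAt_arcLength hg x).continuousAt

theorem monotone_arcLength (hg : Continuous g) : Monotone (arcLength g) :=
  monotone_of_hasDerivAt_nonneg (hasDerivAt_arcLength hg) fun _ => sqrt_nonneg _

variable {r : ℝ}

theorem mul_sin_arcLength_div_le {c : ℝ} (hr : 0 < r) (hc : 0 ≤ c) (hg : Continuous g)
    (hg₀ : ∀ x ∈ Ioo 0 c, 0 ≤ g x)
    (hθ : ∀ x ∈ Ioo 0 c, arctan (g x) ≤ arcLength g x / r)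
    (hπ : arcLength g c ≤ r * π) : r * sin (arcLength g c / r) ≤ c := by
  have hmono : MonotoneOn (fun x => x - r * sin (arcLength g x / r)) (Icc 0 c) := by
    refine monotoneOn_of_hasDerivWithinAt_nonneg (convex_Icc 0 c)
      (f' := fun x => 1 - cos (arcLength g x / r) * √(1 + g x ^ 2))
      (by have := continuous_arcLength hg; fun_prop) ?_ ?_
    · intro x _
      refine (((hasDerivAt_id' x).sub (((hasDerivAt_arcLength hg x).div_const r).sin.const_mul
        r)).congr_deriv ?_).hasDerivWithinAt
      field_simp
    · intro x hx
      rw [interior_Icc] at hx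
      have hLπ : arcLength g x / r ≤ π := by
        rw [div_le_iff₀ hr, mul_comm]
        exact (monotone_arcLength hg hx.2.le).trans hπ
      have hcos : cos (arcLength g x / r) ≤ cos (arctan (g x)) :=
        cos_le_cos_of_nonneg_of_le_pi (arctan_nonneg.2 (hg₀ x hx)) hLπ (hθ x hx)
      have hsec : cos (arctan (g x)) * √(1 + g x ^ 2) = 1 := by
        rw [cos_arctan]
        field_simp
      nlinarith [sqrt_nonneg (1 + g x ^ 2)]
  simpa using hmono (left_mem_Icc.2 hc) (right_mem_Icc.2 hc) hc

theorem arcLength_lt_mul_pi_div_two {a : ℝ} (hr : 0 < r) (ha : 0 ≤ a) (har : a < r)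
    (hg : Continuous g) (hg₀ : ∀ x ∈ Ioo 0 a, 0 ≤ g x)
    (hθ : ∀ x ∈ Ioo 0 a, arctan (g x) ≤ arcLength g x / r) :
    arcLength g a < r * (π / 2) := by
  by_contra! h
  obtain ⟨c, hc, hLc⟩ := intermediate_value_Icc ha (continuous_arcLength hg).continuousOn
    ⟨by simp only [arcLength_zero]; positivity, h⟩
  have hsub : Ioo 0 c ⊆ Ioo 0 a := Ioo_subset_Ioo_right hc.2
  have := mul_sin_arcLength_div_le hr hc.1 hg (fun x hx => hg₀ x (hsub hx))
    (fun x hx => hθ x (hsub hx)) (by rw [hLc]; nlinarith [pi_pos])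
  rw [hLc, mul_div_cancel_left₀ _ hr.ne', sin_pi_div_two, mul_one] at this
  linarith [hc.2]

theorem arcLength_div_le_arcsin {a : ℝ} (hr : 0 < r) (ha : 0 ≤ a) (har : a < r)
    (hg : Continuous g) (hg₀ : ∀ x ∈ Ioo 0 a, 0 ≤ g x)
    (hθ : ∀ x ∈ Ioo 0 a, arctan (g x) ≤ arcLength g x / r) :
    arcLength g a / r ≤ arcsin (a / r) := by
  have hlt := arcLength_lt_mul_pi_div_two hr ha har hg hg₀ hθ
  have hL₀ : 0 ≤ arcLength g a := arcLength_zero (g := g) ▸ monotone_arcLength hg ha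
  rw [le_arcsin_iff_sin_le, le_div_iff₀ hr, mul_comm]
  · exact mul_sin_arcLength_div_le hr ha hg hg₀ hθ (by nlinarith [pi_pos])
  · constructor
    · linarith [div_nonneg hL₀ hr.le, pi_pos]
    · rw [div_le_iff₀ hr]; linarith
  · constructor
    · linarith [div_nonneg ha hr.le]
    · exact (div_le_one hr).2 har.le

end arcLength

theorem stmt1
    (r a : ℝ) (hr : 0 < r) (ha : 0 < a) (har : a < r)
    (f f' : ℝ → ℝ)
    (hconv : ConvexOn ℝ (Set.Icc 0 a) f)
    (hderiv : ∀ x ∈ Set.Icc (0:ℝ) a, HasDerivWithinAt f (f' x) (Set.Icc 0 a) x)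
    (hcont : ContinuousOn f' (Set.Icc 0 a))
    (hf0 : f 0 = 0) (hf'0 : f' 0 = 0)
    (habove : ∀ x ∈ Set.Ioc (0:ℝ) a, f x > r - Real.sqrt (r ^ 2 - x ^ 2)) :
    ∃ x₁ x₂ : ℝ, 0 ≤ x₁ ∧ x₁ < x₂ ∧ x₂ ≤ a ∧
      Real.arctan (f' x₂) - Real.arctan (f' x₁) >
        (1 / r) * ∫ u in x₁..x₂, Real.sqrt (1 + (f' u) ^ 2) := by
  by_contra! h
  set g := IccExtend ha.le ((Icc 0 a).domRestrict f')
  have hg : Continuous g := hcont.domRestrict.Icc_extend'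
  have hgf : ∀ x ∈ Icc 0 a, g x = f' x := fun x hx => IccExtend_of_mem ha.le _ hx
  have hg₀ : ∀ x ∈ Ioo 0 a, 0 ≤ g x := fun x hx => by
    rw [hgf x (Ioo_subset_Icc_self hx), ← hf'0]
    exact hconv.monotoneOn_of_hasDerivWithinAt hderiv (left_mem_Icc.2 ha.le)
      (Ioo_subset_Icc_self hx) hx.1.le
  have hθ : ∀ x ∈ Ioo 0 a, arctan (g x) ≤ arcLength g x / r := fun x hx => by
    have hx' : Icc 0 x ⊆ Icc 0 a := Icc_subset_Icc_right hx.2.le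
    have hL : ∫ u in (0 : ℝ)..x, √(1 + f' u ^ 2) = arcLength g x :=
      intervalIntegral.integral_congr fun u hu => by
        rw [uIcc_of_le hx.1.le] at hu
        simp only [hgf u (hx' hu)]
    have := h 0 x le_rfl hx.1 hx.2.le
    rwa [hf'0, arctan_zero, sub_zero, hL, one_div_mul_eq_div,
      ← hgf x (hx' (right_mem_Icc.2 hx.1.le))] at this
  have hslope : ∀ x ∈ Ioo 0 a, f' x ≤ x / √(r ^ 2 - x ^ 2) := fun x hx => by
    have := (hθ x hx).trans (arcLength_div_le_arcsin hr hx.1.le (hx.2.trans har) hg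
      (fun y hy => hg₀ y ⟨hy.1, hy.2.trans hx.2⟩)
      (fun y hy => hθ y ⟨hy.1, hy.2.trans hx.2⟩))
    rwa [arcsin_div_eq_arctan hr (by rw [abs_of_pos hx.1]; exact hx.2.trans har),
      arctan_le_arctan_iff, hgf x (Ioo_subset_Icc_self hx)] at this
  have hcircle := sub_le_sub_of_hasDerivWithinAt_le ha.le hderiv (by fun_prop)
    (fun x hx => hasDerivAt_sub_sqrt_sq_sub_sq (by nlinarith [hx.1, hx.2])) hslope
  rw [hf0, zero_pow two_ne_zero, sub_zero, sub_zero, sqrt_sq hr.le] at hcircle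
  linarith [habove a ⟨ha, le_rfl⟩]
end

section
/- Let p : ℝ → ℝ² be continuously differentiable with p'(t) = (cos Θ(t), sin Θ(t)) for all t, where Θ : ℝ → ℝ is κ-Lipschitz for some κ > 0. Suppose there are c ∈ ℝ², r > 0 and ε > 0 such that ‖p(0) − c‖ = r and ‖p(t) − c‖ ≤ r for all t with |t| < ε (the curve stays inside the closed disk of radius r about c near a point where it touches its boundary). Then κ ≥ 1/r. -/
/-!
At the touching point the tangent `u = p'(0)` is orthogonal to `v = p(0) - c`. A Lipschitz
tangent keeps the curve within `K t² / 2` of the tangent line, so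
`‖t • u + v‖ = √(t² + r²) ≤ ‖p t - c‖ + K t² / 2 ≤ r + K t² / 2`. Squaring and dividing by `t²`
gives `1 ≤ K r + (K t / 2)²` for all small `t > 0`, hence `1 ≤ K r` in the limit.
-/

open Filter Metric NNReal Real Set Topology

theorem norm_sub_sub_smul_deriv_le_of_lipschitzWith {E : Type*} [NormedAddCommGroup E]
    [NormedSpace ℝ E] {f f' : ℝ → E} {K : ℝ≥0}
    (hf : ∀ t, HasDerivAt f (f' t) t) (hf' : LipschitzWith K f') {a b : ℝ} (hab : a ≤ b) :
    ‖f b - f a - (b - a) • f' a‖ ≤ K / 2 * (b - a) ^ 2 := by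
  let g : ℝ → E := fun s => f s - f a - (s - a) • f' a
  have hg : ∀ s, HasDerivAt g (f' s - f' a) s := fun s =>
    (((hf s).sub_const (f a)).sub (((hasDerivAt_id s).sub_const a).smul_const (f' a))).congr_deriv
      (by simp)
  have hB : ∀ s, HasDerivAt (fun s => K / 2 * (s - a) ^ 2) (K * (s - a)) s := fun s =>
    ((((hasDerivAt_id s).sub_const a).pow 2).const_mul ((K : ℝ) / 2)).congr_deriv (by
      simp only [Nat.cast_ofNat, id_eq, Nat.add_one_sub_one, pow_one, mul_one]; ring)
  refine image_norm_le_of_norm_deriv_right_le_deriv_boundary (f := g)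
    (fun s _ => (hg s).continuousAt.continuousWithinAt) (fun s _ => (hg s).hasDerivWithinAt)
    (by simp [g]) hB (fun s hs => ?_) (right_mem_Icc.mpr hab)
  simpa [abs_of_nonneg (sub_nonneg.mpr hs.1)] using hf'.norm_sub_le s a

section Sphere

variable {E : Type*} [NormedAddCommGroup E] [InnerProductSpace ℝ E]

theorem inner_sub_deriv_eq_zero_of_isLocalMax_norm_sub {f : ℝ → E} {f' c : E} {t : ℝ}
    (hf : HasDerivAt f f' t) (hmax : IsLocalMax (fun s => ‖f s - c‖) t) :
    inner ℝ (f t - c) f' = 0 := by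
  have hsq : IsLocalMax (fun s => ‖f s - c‖ ^ 2) t :=
    hmax.mono fun s hs => pow_le_pow_left₀ (norm_nonneg _) hs 2
  simpa using hsq.hasDerivAt_eq_zero (hf.sub_const c).norm_sq

theorem one_le_mul_norm_of_isLocalMax_norm_sub {p p' : ℝ → E} {K : ℝ≥0} {c : E}
    (hp : ∀ t, HasDerivAt p (p' t) t) (hp' : LipschitzWith K p') (hunit : ‖p' 0‖ = 1)
    (hmax : IsLocalMax (fun t => ‖p t - c‖) 0) :
    1 ≤ K * ‖p 0 - c‖ := by
  set r := ‖p 0 - c‖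
  have hperp : inner ℝ (p' 0) (p 0 - c) = 0 := by
    rw [real_inner_comm]
    exact inner_sub_deriv_eq_zero_of_isLocalMax_norm_sub (hp 0) hmax
  have hbound : ∀ t, 0 < t → ‖p t - c‖ ≤ r → 1 ≤ K * r + (K * t / 2) ^ 2 := by
    intro t ht hle
    have hdev : ‖p t - p 0 - t • p' 0‖ ≤ K / 2 * t ^ 2 := by
      simpa using norm_sub_sub_smul_deriv_le_of_lipschitzWith hp hp' ht.le
    have hpyth : ‖t • p' 0 + (p 0 - c)‖ ^ 2 = t ^ 2 + r ^ 2 := by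
      have horth : inner ℝ (t • p' 0) (p 0 - c) = 0 := by rw [real_inner_smul_left, hperp, mul_zero]
      rw [sq, norm_add_sq_eq_norm_sq_add_norm_sq_real horth, norm_smul, hunit, Real.norm_eq_abs,
        abs_of_pos ht]
      ring
    have htri : ‖t • p' 0 + (p 0 - c)‖ ≤ r + K / 2 * t ^ 2 := by
      calc ‖t • p' 0 + (p 0 - c)‖ = ‖(p t - c) - (p t - p 0 - t • p' 0)‖ := by congr 1; abel
        _ ≤ ‖p t - c‖ + ‖p t - p 0 - t • p' 0‖ := norm_sub_le _ _
        _ ≤ r + K / 2 * t ^ 2 := add_le_add hle hdev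
    have hsq : t ^ 2 + r ^ 2 ≤ (r + K / 2 * t ^ 2) ^ 2 :=
      hpyth ▸ pow_le_pow_left₀ (norm_nonneg _) htri 2
    have ht2 : 0 < t ^ 2 := by positivity
    nlinarith
  have hlim : Tendsto (fun t : ℝ => K * r + (K * t / 2) ^ 2) (𝓝[>] 0) (𝓝 (K * r)) := by
    apply tendsto_nhdsWithin_of_tendsto_nhds
    have hcont : Continuous fun t : ℝ => K * r + (K * t / 2) ^ 2 := by fun_prop
    simpa using hcont.tendsto 0
  refine ge_of_tendsto hlim ?_
  filter_upwards [nhdsWithin_le_nhds hmax, self_mem_nhdsWithin] with t hle ht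
  exact hbound t ht hle

end Sphere

noncomputable def angleUnitVec (θ : ℝ) : EuclideanSpace ℝ (Fin 2) := WithLp.toLp 2 ![cos θ, sin θ]

theorem norm_angleUnitVec (θ : ℝ) : ‖angleUnitVec θ‖ = 1 := by
  simp [angleUnitVec, EuclideanSpace.norm_eq, Fin.sum_univ_two]

theorem lipschitzWith_one_angleUnitVec : LipschitzWith 1 angleUnitVec := by
  refine LipschitzWith.of_dist_le_mul fun x y => ?_
  have hchord : (cos x - cos y) ^ 2 + (sin x - sin y) ^ 2 ≤ (x - y) ^ 2 := by
    have := one_sub_sq_div_two_le_cos (x := x - y)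
    rw [cos_sub] at this
    nlinarith [sin_sq_add_cos_sq x, sin_sq_add_cos_sq y]
  simp only [EuclideanSpace.dist_eq, angleUnitVec, Fin.sum_univ_two, Real.dist_eq, sq_abs,
    NNReal.coe_one, one_mul]
  simpa [Real.sqrt_sq_eq_abs] using Real.sqrt_le_sqrt hchord

theorem stmt3_general
    (p : ℝ → EuclideanSpace ℝ (Fin 2)) (Θ : ℝ → ℝ) (κ : ℝ)
    (hderiv : ∀ t, HasDerivAt p (WithLp.toLp 2 ![Real.cos (Θ t), Real.sin (Θ t)]) t)
    (hlip : LipschitzWith (Real.toNNReal κ) Θ)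
    (c : EuclideanSpace ℝ (Fin 2)) (r ε : ℝ) (hr : 0 < r) (hε : 0 < ε)
    (htouch : ‖p 0 - c‖ = r)
    (hinside : ∀ t : ℝ, |t| < ε → ‖p t - c‖ ≤ r) :
    1 / r ≤ κ := by
  have hmax : IsLocalMax (fun t => ‖p t - c‖) 0 := by
    filter_upwards [ball_mem_nhds (0 : ℝ) hε] with t ht
    rw [htouch]
    exact hinside t (by simpa using ht)
  have hcurv : 1 ≤ Real.toNNReal κ * r := by
    simpa [htouch] using one_le_mul_norm_of_isLocalMax_norm_sub (p' := angleUnitVec ∘ Θ) hderiv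
      (lipschitzWith_one_angleUnitVec.comp hlip) (norm_angleUnitVec _) hmax
  rw [Real.coe_toNNReal'] at hcurv
  have hκ : 0 ≤ κ := by
    by_contra! hneg
    rw [max_eq_right hneg.le] at hcurv
    linarith
  rw [max_eq_left hκ] at hcurv
  rwa [div_le_iff₀ hr]

theorem stmt3
    (p : ℝ → EuclideanSpace ℝ (Fin 2)) (Θ : ℝ → ℝ) (κ : ℝ) (hκ : 0 < κ)
    (hderiv : ∀ t, HasDerivAt p (WithLp.toLp 2 ![Real.cos (Θ t), Real.sin (Θ t)]) t)
    (hlip : LipschitzWith (Real.toNNReal κ) Θ)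
    (c : EuclideanSpace ℝ (Fin 2)) (r ε : ℝ) (hr : 0 < r) (hε : 0 < ε)
    (htouch : ‖p 0 - c‖ = r)
    (hinside : ∀ t : ℝ, |t| < ε → ‖p t - c‖ ≤ r) :
    1 / r ≤ κ :=
  stmt3_general p Θ κ hderiv hlip c r ε hr hε htouch hinside
end

section
/- Let p be a smooth closed convex path with curvature bound κ > 0, with turning angle Θ. Then for every t ∈ ℝ, the tangent line of p at p(t) supports the convex hull of the curve: for every x ∈ convexHull ℝ (range p), ⟨x − p(t), ν(t)⟩ ≥ 0, where ν(t) = (−sin Θ(t), cos Θ(t)) is the inward unit normal (Θ nondecreasing corresponds to counterclockwise orientation). -/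
open Metric Set Real

/-!
Fix `t` and let `f s = ⟪p s - p t, ν t⟫`. Its derivative is `sin (Θ s - Θ t)`, so on the turn
`[t, t + L]` the function `f` increases until `Θ` has turned by `π` and decreases afterwards;
since `f` vanishes at both ends of the turn it is nonnegative there, hence everywhere by
periodicity. Thus the curve lies in the closed half-plane `{y | 0 ≤ ⟪y - p t, ν t⟫}`, and so
does its convex hull.
-/

theorem convex_setOf_inner_sub_nonneg {E : Type*} [NormedAddCommGroup E]
    [InnerProductSpace ℝ E] (a ν : E) : Convex ℝ {y : E | 0 ≤ inner ℝ (y - a) ν} := by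
  simpa only [inner_sub_left, sub_nonneg] using convex_halfSpace_ge
    (isBoundedBilinearMap_inner.isBoundedLinearMap_left ν).toIsLinearMap (inner ℝ a ν)

theorem Real.sin_nonpos_of_pi_le_of_le_two_pi {x : ℝ} (hπx : π ≤ x) (hx2π : x ≤ 2 * π) :
    sin x ≤ 0 := by
  rw [← sin_sub_two_pi]
  exact sin_nonpos_of_nonpos_of_neg_pi_le (by linarith) (by linarith)

theorem hasDerivAt_inner_sub_normal {p : ℝ → EuclideanSpace ℝ (Fin 2)} {θ φ s : ℝ}
    (hp : HasDerivAt p !₂[cos θ, sin θ] s) (a : EuclideanSpace ℝ (Fin 2)) :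
    HasDerivAt (fun s => inner ℝ (p s - a) (!₂[-sin φ, cos φ] : EuclideanSpace ℝ (Fin 2)))
      (sin (θ - φ)) s := by
  refine ((hp.sub_const a).inner ℝ (hasDerivAt_const s _)).congr_deriv ?_
  simp only [inner_zero_right, zero_add, PiLp.inner_apply, Fin.sum_univ_two,
    RCLike.inner_apply, conj_trivial, sin_sub, Matrix.cons_val_zero, Matrix.cons_val_one]
  ring

theorem nonneg_of_hasDerivAt_sin_sub {f Θ : ℝ → ℝ} {a b : ℝ} (hΘ : Continuous Θ)
    (hmono : Monotone Θ) (hturn : Θ b = Θ a + 2 * π)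
    (hf : ∀ s, HasDerivAt f (sin (Θ s - Θ a)) s) (ha : f a = 0) (hb : f b = 0) :
    ∀ s ∈ Icc a b, 0 ≤ f s := by
  rintro s ⟨has, hsb⟩
  have hfc : Continuous f := continuous_iff_continuousAt.2 fun s => (hf s).continuousAt
  obtain ⟨c, ⟨hac, hcb⟩, hc⟩ : ∃ c ∈ Icc a b, Θ c = Θ a + π :=
    intermediate_value_Icc (has.trans hsb) hΘ.continuousOn
      ⟨by linarith [pi_pos], by linarith [pi_pos]⟩
  rcases le_total s c with hsc | hcs
  · have hrise : MonotoneOn f (Icc a c) := by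
      refine monotoneOn_of_hasDerivWithinAt_nonneg (convex_Icc a c) hfc.continuousOn
        (fun s _ => (hf s).hasDerivWithinAt) fun r hr => ?_
      rw [interior_Icc] at hr
      exact sin_nonneg_of_nonneg_of_le_pi (by linarith [hmono hr.1.le])
        (by linarith [hc ▸ hmono hr.2.le])
    exact ha ▸ hrise (left_mem_Icc.2 hac) ⟨has, hsc⟩ has
  · have hfall : AntitoneOn f (Icc c b) := by
      refine antitoneOn_of_hasDerivWithinAt_nonpos (convex_Icc c b) hfc.continuousOn
        (fun s _ => (hf s).hasDerivWithinAt) fun r hr => ?_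
      rw [interior_Icc] at hr
      exact sin_nonpos_of_pi_le_of_le_two_pi (by linarith [hc ▸ hmono hr.1.le])
        (by linarith [hturn ▸ hmono hr.2.le])
    exact hb ▸ hfall ⟨hcs, hsb⟩ (right_mem_Icc.2 hcb) hsb

theorem stmt10_general
    (κ : ℝ) (p : ℝ → EuclideanSpace ℝ (Fin 2))
    (L : ℝ) (Θ : ℝ → ℝ) (hL : 0 < L)
    (hderiv : ∀ t, HasDerivAt p (!₂[Real.cos (Θ t), Real.sin (Θ t)]) t)
    (hmono : Monotone Θ) (hlip : LipschitzWith (Real.toNNReal κ) Θ)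
    (hper : ∀ t, p (t + L) = p t)
    (hturn : ∀ t, Θ (t + L) = Θ t + 2 * Real.pi) :
    ∀ t : ℝ, ∀ x ∈ convexHull ℝ (Set.range p),
      (0 : ℝ) ≤ inner ℝ (x - p t)
        (!₂[-(Real.sin (Θ t)), Real.cos (Θ t)] : EuclideanSpace ℝ (Fin 2)) := by
  intro t x hx
  set f : ℝ → ℝ := fun s => inner ℝ (p s - p t)
    (!₂[-(Real.sin (Θ t)), Real.cos (Θ t)] : EuclideanSpace ℝ (Fin 2))
  have hf : ∀ s, HasDerivAt f (sin (Θ s - Θ t)) s := fun s =>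
    hasDerivAt_inner_sub_normal (hderiv s) (p t)
  have hf_periodic : Function.Periodic f L := fun s => by simp only [f, hper]
  refine convexHull_min ?_ (convex_setOf_inner_sub_nonneg (p t) _) hx
  rintro _ ⟨s, rfl⟩
  change 0 ≤ f s
  obtain ⟨r, hr, hfr⟩ := hf_periodic.exists_mem_Ico hL s t
  rw [hfr]
  exact nonneg_of_hasDerivAt_sin_sub hlip.continuous hmono (hturn t) hf (by simp [f])
    (by simp [f, hper t]) r (Ico_subset_Icc_self hr)

theorem stmt10
    (κ : ℝ) (hκ : 0 < κ) (p : ℝ → EuclideanSpace ℝ (Fin 2))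
    (L : ℝ) (Θ : ℝ → ℝ) (hL : 0 < L)
    (hderiv : ∀ t, HasDerivAt p (!₂[Real.cos (Θ t), Real.sin (Θ t)]) t)
    (hmono : Monotone Θ) (hlip : LipschitzWith (Real.toNNReal κ) Θ)
    (hper : ∀ t, p (t + L) = p t)
    (hturn : ∀ t, Θ (t + L) = Θ t + 2 * Real.pi) :
    ∀ t : ℝ, ∀ x ∈ convexHull ℝ (Set.range p),
      (0 : ℝ) ≤ inner ℝ (x - p t)
        (!₂[-(Real.sin (Θ t)), Real.cos (Θ t)] : EuclideanSpace ℝ (Fin 2)) :=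
  stmt10_general κ p L Θ hL hderiv hmono hlip hper hturn
end

section
/- Let E ⊆ ℝ² be a convex polygon and let v be a point in the interior of E. Define r_v = sup{r > 0 : ∃ c ∈ ℝ², v ∈ closedBall c r and closedBall c r ⊆ E} and r* = sup{r > 0 : ∃ c ∈ ℝ², closedBall c r ⊆ E} (the inradius of E). If r_v < r*, then v admits a critical circle: there exist c ∈ ℝ² with ‖v − c‖ = r_v and closedBall c r_v ⊆ E, and points p₁, p₂ on the frontier of E with ‖p₁ − c‖ = ‖p₂ − c‖ = r_v, such that v − c = a·(p₁ − c) + b·(p₂ − c) for some reals a, b ≥ 0 (i.e., v lies on an arc of the circle of radius r_v about c with endpoints p₁, p₂ that is not greater than a semicircle). -/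
/-! The radius `rv` is attained: it is the maximum of the continuous function `c ↦ infDist c Eᶜ`
(the largest radius of a ball about `c` inside `E`) on the compact set where it is `≥ dist v c`.
Let `K` be the set of centres `c` with `closedBall c rv ⊆ E`. Mixing a ball of `K` with a strictly
larger inscribed ball (one exists as `rv < r*`) gives a ball through `v` of radius `> rv` unless the
centre is at distance `≥ rv` from `v`; so a critical centre `c` is a point of `K` nearest to `v`.

If some `w` had `⟪w, v - c⟫ > 0` and `⟪w, p - c⟫ ≤ 0` at every tangent point `p`, tilt `w` slightly
towards the centre of the larger ball: this makes it point strictly inwards at every tangent point,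
so by compactness the ball can slide a little in direction `w` inside `E`, and its centre comes
closer to `v`, a contradiction. By this Farkas-type condition, in the plane `v - c` lies in the cone
spanned by two tangent directions: take the one closest in angle to `v - c` on one side and look for
a partner on the other side within a half-turn; if there is none, the normal to the first one
separates. -/

open Metric Set Real

/-- A smooth closed convex path with curvature bound `κ`: a `C¹` unit-speed map
`p : ℝ → ℝ²` whose tangent angle `Θ` is nondecreasing, `κ`-Lipschitz (average
curvature at most `κ`), with `p` periodic of period `L` and `Θ` increasing by `2π`
over a period. -/
def IsSmoothClosedConvexPath (κ : ℝ) (p : ℝ → EuclideanSpace ℝ (Fin 2)) : Prop :=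
  ∃ (L : ℝ) (Θ : ℝ → ℝ), 0 < L ∧
    (∀ t, HasDerivAt p (WithLp.toLp 2 ![Real.cos (Θ t), Real.sin (Θ t)]) t) ∧
    Monotone Θ ∧ LipschitzWith (Real.toNNReal κ) Θ ∧
    (∀ t, p (t + L) = p t) ∧
    (∀ t, Θ (t + L) = Θ t + 2 * Real.pi)

/-- `p` is a tour of `X` in `E`. -/
def IsTour (p : ℝ → EuclideanSpace ℝ (Fin 2)) (X E : Set (EuclideanSpace ℝ (Fin 2))) : Prop :=
  Set.range p ⊆ E ∧ X ⊆ convexHull ℝ (Set.range p)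

/-- A convex polygon: the convex hull of finitely many points, with nonempty interior. -/
def IsConvexPolygon (E : Set (EuclideanSpace ℝ (Fin 2))) : Prop :=
  (∃ S : Finset (EuclideanSpace ℝ (Fin 2)), E = convexHull ℝ (S : Set (EuclideanSpace ℝ (Fin 2)))) ∧
    (interior E).Nonempty

/-- `NBall ρ E`: the union of all closed balls of radius `ρ` contained in `E`. -/
def NBall (ρ : ℝ) (E : Set (EuclideanSpace ℝ (Fin 2))) : Set (EuclideanSpace ℝ (Fin 2)) :=
  {x | ∃ c, Metric.closedBall c ρ ⊆ E ∧ x ∈ Metric.closedBall c ρ}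

open Filter Topology RealInnerProductSpace Pointwise

section NormedSpace

variable {V : Type*} [NormedAddCommGroup V] [NormedSpace ℝ V]

theorem Convex.closedBall_add_smul_sub_subset [ProperSpace V] {s : Set V} (hs : Convex ℝ s)
    {c₁ c₂ : V} {r₁ r₂ t : ℝ} (hr₁ : 0 ≤ r₁) (hr₂ : 0 ≤ r₂) (h₁ : closedBall c₁ r₁ ⊆ s)
    (h₂ : closedBall c₂ r₂ ⊆ s) (ht₀ : 0 ≤ t) (ht₁ : t ≤ 1) :
    closedBall (c₁ + t • (c₂ - c₁)) (r₁ + t * (r₂ - r₁)) ⊆ s := by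
  have ht₁' : 0 ≤ 1 - t := by linarith
  calc closedBall (c₁ + t • (c₂ - c₁)) (r₁ + t * (r₂ - r₁))
      = (1 - t) • closedBall c₁ r₁ + t • closedBall c₂ r₂ := by
        rw [smul_closedBall _ _ hr₁, smul_closedBall _ _ hr₂, closedBall_add_closedBall
          (by positivity) (by positivity), Real.norm_of_nonneg ht₁', Real.norm_of_nonneg ht₀]
        congr 1 <;> [module; ring]
    _ ⊆ (1 - t) • s + t • s := add_subset_add (smul_set_mono h₁) (smul_set_mono h₂)
    _ ⊆ s := hs.set_combo_subset ht₁' ht₀ (by ring)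

def ballRadiiThrough (s : Set V) (v : V) : Set ℝ :=
  {r | 0 < r ∧ ∃ c, v ∈ closedBall c r ∧ closedBall c r ⊆ s}

theorem exists_isGreatest_ballRadiiThrough [Nontrivial V] {s : Set V} {v : V}
    (hs : IsCompact s) (hv : v ∈ interior s) : ∃ r, IsGreatest (ballRadiiThrough s v) r := by
  have hsc : sᶜ.Nonempty := nonempty_compl.2 hs.ne_univ
  set ρ : V → ℝ := fun c ↦ infDist c sᶜ
  have hρ : Continuous ρ := continuous_infDist_pt _
  have le_ρ : ∀ {c r}, closedBall c r ⊆ s → r ≤ ρ c := fun h ↦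
    (le_infDist hsc).2 fun y hy ↦ le_of_lt <| not_le.1 fun hle ↦ hy (h (mem_closedBall'.2 hle))
  have ball_ρ : ∀ {c}, c ∈ s → closedBall c (ρ c) ⊆ s := fun hc ↦
    (closedBall_infDist_compl_subset_closure hc).trans hs.isClosed.closure_subset
  set L := {c | dist v c ≤ ρ c}
  have hLs : L ⊆ s := fun c hc ↦ by
    by_contra hcs
    have hvc : dist v c ≤ 0 := hc.trans_eq (infDist_zero_of_mem hcs)
    exact hcs (dist_le_zero.1 hvc ▸ interior_subset hv)
  have hL : IsCompact L :=
    hs.of_isClosed_subset (isClosed_le (continuous_const.dist continuous_id) hρ) hLs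
  have hvL : v ∈ L := by simp [L, ρ, infDist_nonneg]
  obtain ⟨c, hcL, hmax⟩ := hL.exists_isMaxOn ⟨v, hvL⟩ hρ.continuousOn
  have hρv : 0 < ρ v :=
    (infDist_pos_iff_notMem_closure hsc).1 (by rwa [closure_compl, notMem_compl_iff])
  refine ⟨ρ c, ⟨hρv.trans_le (hmax hvL), c, hcL, ball_ρ (hLs hcL)⟩, ?_⟩
  rintro r ⟨-, c', hvc', hc'⟩
  exact (le_ρ hc').trans (hmax ((mem_closedBall.1 hvc').trans (le_ρ hc')))

theorem exists_mem_ballRadiiThrough_gt [ProperSpace V] {s : Set V} (hs : Convex ℝ s)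
    {c c' v : V} {r r' : ℝ} (hr : 0 < r) (hrr' : r < r') (h : closedBall c r ⊆ s)
    (h' : closedBall c' r' ⊆ s) (hv : dist v c < r) : ∃ r'' ∈ ballRadiiThrough s v, r < r'' := by
  have hnear : ∀ᶠ t in 𝓝 (0 : ℝ), dist v (c + t • (c' - c)) < r :=
    (by fun_prop : Continuous fun t : ℝ ↦ dist v (c + t • (c' - c))).continuousAt.eventually_lt
      continuousAt_const (by simpa using hv)
  obtain ⟨t, hvt, ht₀, ht₁⟩ :=
    ((hnear.filter_mono nhdsWithin_le_nhds).and (Ioc_mem_nhdsGT one_pos)).exists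
  have hrt : r < r + t * (r' - r) := by nlinarith
  exact ⟨_, ⟨hr.trans hrt, _, mem_closedBall.2 (hvt.le.trans hrt.le),
    hs.closedBall_add_smul_sub_subset hr.le (hr.trans hrr').le h h' ht₀.le ht₁⟩, hrt⟩

end NormedSpace

section InnerProductSpace

variable {V : Type*} [NormedAddCommGroup V] [InnerProductSpace ℝ V]

theorem norm_sub_smul_sq (x w : V) (t : ℝ) :
    ‖x - t • w‖ ^ 2 = ‖x‖ ^ 2 - 2 * t * ⟪x, w⟫ + t ^ 2 * ‖w‖ ^ 2 := by
  rw [norm_sub_sq_real, real_inner_smul_right, norm_smul, Real.norm_eq_abs, mul_pow, sq_abs]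
  ring

theorem dist_le_dist_add_smul_of_inner_nonpos {q c w : V} {t : ℝ} (ht : 0 ≤ t)
    (hw : ⟪q - c, w⟫ ≤ 0) : dist q c ≤ dist q (c + t • w) := by
  rw [dist_eq_norm, dist_eq_norm, ← sub_sub]
  refine le_of_sq_le_sq ?_ (norm_nonneg _)
  rw [norm_sub_smul_sq]
  nlinarith [mul_nonpos_of_nonneg_of_nonpos ht hw]

theorem eventually_norm_sub_smul_lt {u w : V} (hw : 0 < ⟪u, w⟫) :
    ∀ᶠ t in 𝓝[>] (0 : ℝ), ‖u - t • w‖ < ‖u‖ := by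
  have hsmall : ∀ᶠ t in 𝓝 (0 : ℝ), t * ‖w‖ ^ 2 < 2 * ⟪u, w⟫ :=
    (by fun_prop : Continuous fun t : ℝ ↦ t * ‖w‖ ^ 2).continuousAt.eventually_lt
      continuousAt_const (by simpa using hw)
  filter_upwards [hsmall.filter_mono nhdsWithin_le_nhds, self_mem_nhdsWithin]
    with t ht (ht₀ : 0 < t)
  refine lt_of_pow_lt_pow_left₀ 2 (norm_nonneg _) ?_
  rw [norm_sub_smul_sq]
  nlinarith

theorem inner_neg_of_closedBall_subset_of_lt [ProperSpace V] {s : Set V} (hs : Convex ℝ s)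
    {c c' p : V} {r r' : ℝ} (hr : 0 < r) (hrr' : r < r') (h : closedBall c r ⊆ s)
    (h' : closedBall c' r' ⊆ s) (hp : p ∈ sphere c r) (hps : p ∉ interior s) :
    ⟪c' - c, p - c⟫ < 0 := by
  have hbound : ∀ t ∈ Ioc (0 : ℝ) 1,
      ⟪c' - c, p - c⟫ ≤ t * ‖c' - c‖ ^ 2 / 2 - r * (r' - r) := by
    rintro t ⟨ht₀, ht₁⟩
    have hball := hs.closedBall_add_smul_sub_subset hr.le (hr.trans hrr').le h h' ht₀.le ht₁
    have hfar : r + t * (r' - r) ≤ ‖(p - c) - t • (c' - c)‖ := by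
      rw [sub_sub, ← dist_eq_norm, ← not_lt, ← mem_ball]
      exact fun hpb ↦ hps (interior_maximal (ball_subset_closedBall.trans hball) isOpen_ball hpb)
    have hsq := pow_le_pow_left₀ (by nlinarith) hfar 2
    rw [norm_sub_smul_sq, mem_sphere_iff_norm.1 hp, real_inner_comm] at hsq
    have h2 : t * (2 * ⟪c' - c, p - c⟫) ≤ t * (t * ‖c' - c‖ ^ 2 - 2 * (r * (r' - r))) := by
      nlinarith [sq_nonneg (t * (r' - r))]
    linarith [le_of_mul_le_mul_left h2 ht₀]
  have hsmall : ∀ᶠ t in 𝓝 (0 : ℝ), t * ‖c' - c‖ ^ 2 / 2 < r * (r' - r) :=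
    (by fun_prop : Continuous fun t : ℝ ↦ t * ‖c' - c‖ ^ 2 / 2).continuousAt.eventually_lt
      continuousAt_const (by simpa using mul_pos hr (sub_pos.2 hrr'))
  obtain ⟨t, ht, htI⟩ :=
    ((hsmall.filter_mono nhdsWithin_le_nhds).and (Ioc_mem_nhdsGT one_pos)).exists
  linarith [hbound t htI]

theorem eventually_closedBall_add_smul_subset [ProperSpace V] {s : Set V} {c w : V} {r : ℝ}
    (h : closedBall c r ⊆ s) (hw : ∀ p ∈ sphere c r ∩ frontier s, ⟪w, p - c⟫ < 0) :
    ∀ᶠ t in 𝓝[>] (0 : ℝ), closedBall (c + t • w) r ⊆ s := by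
  -- Outside `interior s`, only points of `F` can come within `r` of `c + t • w` for small `t`;
  -- they lie outside `closedBall c r`, hence at distance `≥ δ > r` from `c` by compactness.
  set F := closedBall c (r + 1) ∩ (interior s)ᶜ ∩ {q | 0 ≤ ⟪w, q - c⟫}
  have hF : IsCompact F :=
    ((isCompact_closedBall _ _).inter_right isOpen_interior.isClosed_compl).inter_right
      (isClosed_le continuous_const (by fun_prop))
  have hFfar : ∀ q ∈ F, r < dist q c := by
    rintro q ⟨⟨-, hqi⟩, hqw⟩
    by_contra! hle
    rcases hle.lt_or_eq with hlt | heq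
    · exact hqi (interior_maximal (ball_subset_closedBall.trans h) isOpen_ball (mem_ball.2 hlt))
    · exact (hw q ⟨heq, subset_closure (h (mem_closedBall.2 hle)), hqi⟩).not_ge hqw
  obtain ⟨δ, hrδ, hδ⟩ := hF.exists_forall_le' (by fun_prop) hFfar
  have hsmall : ∀ᶠ t in 𝓝 (0 : ℝ), t * ‖w‖ < min (δ - r) 1 :=
    (by fun_prop : Continuous fun t : ℝ ↦ t * ‖w‖).continuousAt.eventually_lt continuousAt_const
      (by simpa using lt_min (sub_pos.2 hrδ) one_pos)
  filter_upwards [hsmall.filter_mono nhdsWithin_le_nhds, self_mem_nhdsWithin]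
    with t ht (ht₀ : 0 < t) q hq
  by_contra hqs
  have hqc : r < dist q c := not_le.1 fun hle ↦ hqs (h (mem_closedBall.2 hle))
  have hqc' : dist q c < r + min (δ - r) 1 := by
    calc dist q c ≤ dist q (c + t • w) + dist (c + t • w) c := dist_triangle _ _ _
      _ ≤ r + t * ‖w‖ := by
        rw [dist_self_add_left, norm_smul, Real.norm_of_nonneg ht₀.le]
        linarith [mem_closedBall.1 hq]
      _ < r + min (δ - r) 1 := by linarith
  rcases le_or_gt 0 ⟪w, q - c⟫ with hqw | hqw
  · have hqF : q ∈ F := ⟨⟨mem_closedBall.2 (by linarith [min_le_right (δ - r) 1]),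
      fun hqi ↦ hqs (interior_subset hqi)⟩, hqw⟩
    linarith [hδ q hqF, min_le_left (δ - r) 1]
  · have := dist_le_dist_add_smul_of_inner_nonpos ht₀.le (real_inner_comm w (q - c) ▸ hqw.le)
    linarith [mem_closedBall.1 hq]

theorem inner_nonpos_of_forall_tangent [ProperSpace V] {s : Set V} {c v w₀ w : V} {r : ℝ}
    (h : closedBall c r ⊆ s) (hfar : ∀ c', closedBall c' r ⊆ s → r ≤ dist v c')
    (hvc : dist v c ≤ r) (hw₀ : ∀ p ∈ sphere c r ∩ frontier s, ⟪w₀, p - c⟫ < 0)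
    (hw : ∀ p ∈ sphere c r ∩ frontier s, ⟪w, p - c⟫ ≤ 0) : ⟪w, v - c⟫ ≤ 0 := by
  by_contra! hpos
  have htilt : ∀ᶠ ε in 𝓝 (0 : ℝ), 0 < ⟪w + ε • w₀, v - c⟫ :=
    continuousAt_const.eventually_lt
      (by fun_prop : Continuous fun ε : ℝ ↦ ⟪w + ε • w₀, v - c⟫).continuousAt (by simpa using hpos)
  obtain ⟨ε, hεv, hε⟩ :=
    ((htilt.filter_mono nhdsWithin_le_nhds).and (self_mem_nhdsWithin (s := Ioi 0))).exists
  have hstrict : ∀ p ∈ sphere c r ∩ frontier s, ⟪w + ε • w₀, p - c⟫ < 0 := fun p hp ↦ by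
    rw [inner_add_left, real_inner_smul_left]
    nlinarith [hw p hp, hw₀ p hp, mul_neg_of_pos_of_neg (show 0 < ε from hε) (hw₀ p hp)]
  obtain ⟨t, hball, hcloser⟩ := ((eventually_closedBall_add_smul_subset h hstrict).and
    (eventually_norm_sub_smul_lt (real_inner_comm _ (v - c) ▸ hεv))).exists
  have := hfar _ hball
  rw [dist_eq_norm, ← sub_sub] at this
  linarith [dist_eq_norm v c]

end InnerProductSpace

/-- On a circle, in the half-plane `f ≥ 0`, the angle from the `g`-axis grows as `g` decreases. -/
theorem mul_le_mul_of_sq_add_sq_eq {f₁ g₁ f g : ℝ} (hf₁ : 0 < f₁) (hf : 0 ≤ f)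
    (hc : f₁ ^ 2 + g₁ ^ 2 = f ^ 2 + g ^ 2) (hg : g ≤ g₁) : f₁ * g ≤ g₁ * f := by
  rcases le_total 0 g with hg₀ | hg₀
  · have : f₁ ≤ f := by nlinarith
    nlinarith
  · rcases le_total 0 g₁ with hg₁ | hg₁
    · nlinarith
    · have : f ≤ f₁ := by nlinarith
      nlinarith

section Frame

variable {V : Type*} [NormedAddCommGroup V] [InnerProductSpace ℝ V] {u j : V}

-- The hypothesis `hj` says that `x ↦ (⟪u, x⟫, ⟪j, x⟫) / ‖u‖` is an isometric embedding into `ℝ²`.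

theorem eq_of_inner_eq_of_inner_eq (hu : u ≠ 0)
    (hj : ∀ x, ⟪u, x⟫ ^ 2 + ⟪j, x⟫ ^ 2 = ‖u‖ ^ 2 * ‖x‖ ^ 2) {x y : V}
    (hux : ⟪u, x⟫ = ⟪u, y⟫) (hjx : ⟪j, x⟫ = ⟪j, y⟫) : x = y := by
  have h := hj (x - y)
  rw [inner_sub_right, inner_sub_right, hux, hjx, sub_self] at h
  have : ‖x - y‖ ^ 2 = 0 := by
    simpa [hu] using h.symm
  exact sub_eq_zero.1 (norm_eq_zero.1 (pow_eq_zero_iff two_ne_zero |>.1 this))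

theorem eq_smul_add_smul_of_inner_eq (hu : u ≠ 0)
    (hj : ∀ x, ⟪u, x⟫ ^ 2 + ⟪j, x⟫ ^ 2 = ‖u‖ ^ 2 * ‖x‖ ^ 2) (hju : ⟪j, u⟫ = 0) {x₁ x₂ : V}
    {a b : ℝ} (hg : a * ⟪u, x₁⟫ + b * ⟪u, x₂⟫ = ‖u‖ ^ 2) (hf : a * ⟪j, x₁⟫ + b * ⟪j, x₂⟫ = 0) :
    u = a • x₁ + b • x₂ :=
  eq_of_inner_eq_of_inner_eq hu hj
    (by rw [real_inner_self_eq_norm_sq, inner_add_right, real_inner_smul_right,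
      real_inner_smul_right, hg])
    (by rw [hju, inner_add_right, real_inner_smul_right, real_inner_smul_right, hf])

theorem exists_eq_smul_add_smul_of_inner_pos {T : Set V} {r : ℝ} (hT : IsCompact T)
    (hTr : ∀ p ∈ T, ‖p‖ = r) (hu : u ≠ 0)
    (hj : ∀ x, ⟪u, x⟫ ^ 2 + ⟪j, x⟫ ^ 2 = ‖u‖ ^ 2 * ‖x‖ ^ 2) (hju : ⟪j, u⟫ = 0)
    (hH : ∀ w, (∀ p ∈ T, ⟪w, p⟫ ≤ 0) → ⟪w, u⟫ ≤ 0) (hpos : ∃ p ∈ T, 0 < ⟪j, p⟫) :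
    ∃ p₁ ∈ T, ∃ p₂ ∈ T, ∃ a b : ℝ, 0 ≤ a ∧ 0 ≤ b ∧ u = a • p₁ + b • p₂ := by
  set f : V → ℝ := fun p ↦ ⟪j, p⟫
  set g : V → ℝ := fun p ↦ ⟪u, p⟫
  have hcirc : ∀ p ∈ T, f p ^ 2 + g p ^ 2 = ‖u‖ ^ 2 * r ^ 2 := fun p hp ↦ by
    rw [add_comm, hj, hTr p hp]
  have hu₀ : 0 < ‖u‖ := norm_pos_iff.2 hu
  obtain ⟨q, hqT, hq : 0 < f q⟩ := hpos
  -- `p₁` is the point of `T` on the `j`-side of `u` that is closest to `u` in angle.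
  obtain ⟨p₁, ⟨hp₁, hf₁ : 0 ≤ f p₁⟩, hmax⟩ :=
    (hT.inter_right (isClosed_le continuous_const (by fun_prop : Continuous f))).exists_isMaxOn
      ⟨q, hqT, hq.le⟩ (by fun_prop : Continuous g).continuousOn
  rcases hf₁.lt_or_eq with hf₁ | hf₁
  swap
  · have hg₁ : 0 < g p₁ := by
      by_contra! hg₁
      have hgq : g q ≤ g p₁ := hmax ⟨hqT, hq.le⟩
      nlinarith [hcirc p₁ hp₁, hcirc q hqT]
    refine ⟨p₁, hp₁, p₁, hp₁, ‖u‖ ^ 2 / g p₁, 0, by positivity, le_rfl,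
      eq_smul_add_smul_of_inner_eq hu hj hju ?_ ?_⟩
    · rw [zero_mul, add_zero, div_mul_cancel₀ _ hg₁.ne']
    · simp [← hf₁, f]
  by_cases hpair : ∃ p₂ ∈ T, f p₂ < 0 ∧ 0 < f p₁ * g p₂ - f p₂ * g p₁
  · obtain ⟨p₂, hp₂, hf₂, hD⟩ := hpair
    refine ⟨p₁, hp₁, p₂, hp₂, -f p₂ * ‖u‖ ^ 2 / (f p₁ * g p₂ - f p₂ * g p₁),
      f p₁ * ‖u‖ ^ 2 / (f p₁ * g p₂ - f p₂ * g p₁), ?_, ?_,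
      eq_smul_add_smul_of_inner_eq hu hj hju ?_ ?_⟩
    · exact div_nonneg (mul_nonneg (by linarith) (by positivity)) hD.le
    · positivity
    · field_simp
      ring
    · field_simp
      ring
  push Not at hpair
  -- No partner for `p₁` within a half-turn: the normal to `p₁` separates `T` from `u`.
  have hw : ∀ p ∈ T, ⟪f p₁ • u - g p₁ • j, p⟫ ≤ 0 := fun p hp ↦ by
    rw [inner_sub_left, real_inner_smul_left, real_inner_smul_left]
    rcases le_or_gt 0 (f p) with hfp | hfp
    · have := mul_le_mul_of_sq_add_sq_eq hf₁ hfp ((hcirc p₁ hp₁).trans (hcirc p hp).symm)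
        (hmax ⟨hp, hfp⟩)
      simp only [f, g] at this ⊢
      linarith
    · have := hpair p hp hfp
      simp only [f, g] at this ⊢
      linarith
  have := hH _ hw
  rw [inner_sub_left, real_inner_smul_left, real_inner_smul_left, hju,
    real_inner_self_eq_norm_sq] at this
  nlinarith [mul_pos hf₁ (pow_pos hu₀ 2)]

end Frame

section Plane

def rotate90 (u : EuclideanSpace ℝ (Fin 2)) : EuclideanSpace ℝ (Fin 2) := !₂[-u 1, u 0]

theorem inner_rotate90_self (u : EuclideanSpace ℝ (Fin 2)) : ⟪rotate90 u, u⟫ = 0 := by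
  simp [rotate90, PiLp.inner_apply, Fin.sum_univ_two]
  ring

theorem inner_sq_add_inner_rotate90_sq (u x : EuclideanSpace ℝ (Fin 2)) :
    ⟪u, x⟫ ^ 2 + ⟪rotate90 u, x⟫ ^ 2 = ‖u‖ ^ 2 * ‖x‖ ^ 2 := by
  rw [EuclideanSpace.norm_eq, EuclideanSpace.norm_eq, Real.sq_sqrt (by positivity),
    Real.sq_sqrt (by positivity)]
  simp [rotate90, PiLp.inner_apply, Fin.sum_univ_two]
  ring

theorem exists_eq_smul_add_smul_of_forall_inner_nonpos {T : Set (EuclideanSpace ℝ (Fin 2))}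
    {u : EuclideanSpace ℝ (Fin 2)} {r : ℝ} (hT : IsCompact T) (hTr : ∀ p ∈ T, ‖p‖ = r)
    (hu : u ≠ 0) (hH : ∀ w, (∀ p ∈ T, ⟪w, p⟫ ≤ 0) → ⟪w, u⟫ ≤ 0) :
    ∃ p₁ ∈ T, ∃ p₂ ∈ T, ∃ a b : ℝ, 0 ≤ a ∧ 0 ≤ b ∧ u = a • p₁ + b • p₂ := by
  have hj := inner_sq_add_inner_rotate90_sq u
  have hju := inner_rotate90_self u
  by_cases hpos : ∃ p ∈ T, 0 < ⟪rotate90 u, p⟫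
  · exact exists_eq_smul_add_smul_of_inner_pos hT hTr hu hj hju hH hpos
  by_cases hneg : ∃ p ∈ T, ⟪rotate90 u, p⟫ < 0
  · exact exists_eq_smul_add_smul_of_inner_pos (j := -rotate90 u) hT hTr hu (by simpa using hj)
      (by simpa using hju) hH (by simpa using hneg)
  push Not at hpos hneg
  obtain ⟨p, hp, hgp⟩ : ∃ p ∈ T, 0 < ⟪u, p⟫ := by
    by_contra! h
    exact hu (inner_self_eq_zero.1 (le_antisymm (hH u h) real_inner_self_nonneg))
  refine ⟨p, hp, p, hp, ‖u‖ ^ 2 / ⟪u, p⟫, 0, by positivity, le_rfl,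
    eq_smul_add_smul_of_inner_eq hu hj hju ?_ ?_⟩
  · rw [zero_mul, add_zero, div_mul_cancel₀ _ hgp.ne']
  · simp [le_antisymm (hpos p hp) (hneg p hp)]

end Plane

theorem stmt11
    (E : Set (EuclideanSpace ℝ (Fin 2))) (hE : IsConvexPolygon E)
    (v : EuclideanSpace ℝ (Fin 2)) (hv : v ∈ interior E)
    (rv rstar : ℝ)
    (hrv : rv = sSup {r : ℝ | 0 < r ∧ ∃ c : EuclideanSpace ℝ (Fin 2),
      v ∈ Metric.closedBall c r ∧ Metric.closedBall c r ⊆ E})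
    (hrstar : rstar = sSup {r : ℝ | 0 < r ∧ ∃ c : EuclideanSpace ℝ (Fin 2),
      Metric.closedBall c r ⊆ E})
    (hlt : rv < rstar) :
    ∃ (c p₁ p₂ : EuclideanSpace ℝ (Fin 2)) (a b : ℝ),
      ‖v - c‖ = rv ∧ Metric.closedBall c rv ⊆ E ∧
      p₁ ∈ frontier E ∧ p₂ ∈ frontier E ∧
      ‖p₁ - c‖ = rv ∧ ‖p₂ - c‖ = rv ∧
      0 ≤ a ∧ 0 ≤ b ∧ v - c = a • (p₁ - c) + b • (p₂ - c) := by
  obtain ⟨⟨S, hS⟩, -⟩ := hE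
  have hEc : IsCompact E := hS ▸ S.finite_toSet.isCompact_convexHull (𝕜 := ℝ)
  have hEconv : Convex ℝ E := hS ▸ convex_convexHull ℝ _
  obtain ⟨r, hr⟩ := exists_isGreatest_ballRadiiThrough hEc hv
  obtain rfl : rv = r := hrv.trans hr.csSup_eq
  obtain ⟨hrv₀, c, hvc, hc⟩ := hr.1
  subst hrstar
  obtain ⟨r', ⟨-, c', hc'⟩, hrr'⟩ :=
    exists_lt_of_lt_csSup (s := {r | 0 < r ∧ ∃ c, closedBall c r ⊆ E}) ⟨rv, hrv₀, c, hc⟩ hlt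
  have hfar : ∀ c'', closedBall c'' rv ⊆ E → rv ≤ dist v c'' := fun c'' h ↦ not_lt.1 fun hnear ↦
    let ⟨_, hr'', hgt⟩ := exists_mem_ballRadiiThrough_gt hEconv hrv₀ hrr' h hc' hnear
    (hr.2 hr'').not_gt hgt
  have hvc' : ‖v - c‖ = rv := (dist_eq_norm v c).symm.trans
    (le_antisymm (mem_closedBall.1 hvc) (hfar c hc))
  have hT : IsCompact ((· - c) '' (sphere c rv ∩ frontier E)) :=
    ((isCompact_sphere c rv).inter_right isClosed_frontier).image (continuous_sub_right c)
  obtain ⟨_, ⟨p₁, hp₁, rfl⟩, _, ⟨p₂, hp₂, rfl⟩, a, b, ha, hb, hab⟩ :=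
    exists_eq_smul_add_smul_of_forall_inner_nonpos hT
      (forall_mem_image.2 fun p hp ↦ mem_sphere_iff_norm.1 hp.1)
      (norm_pos_iff.1 (hvc'.symm ▸ hrv₀))
      fun w hw ↦ inner_nonpos_of_forall_tangent hc hfar (mem_closedBall.1 hvc)
        (fun p hp ↦ inner_neg_of_closedBall_subset_of_lt hEconv hrv₀ hrr' hc hc' hp.1 hp.2.2)
        (forall_mem_image.1 hw)
  exact ⟨c, p₁, p₂, a, b, hvc', hc, hp₁.2, hp₂.2, mem_sphere_iff_norm.1 hp₁.1,
    mem_sphere_iff_norm.1 hp₂.1, ha, hb, hab⟩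
end
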